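/- arXiv:2505.13288 — 6 statements merged into one kernel-verified Lean document; each statement's English description precedes it below -/
import Mathlib

section
/- Let v_1 > v_2 > ⋯ > v_n be real numbers with ∑ v_i = 0, and let {1,…,n} = S_1 ⊔ S_2 be a partition into two nonempty subsets with ∑_{i∈S_1} v_i = 0 and ∑_{i∈S_2} v_i = 0. Writing S_1 = {i_1 < ⋯ < i_{ℓ_1}} and S_2 = {j_1 < ⋯ < j_{ℓ_2}} in increasing order, one has ∑_{k=1}^{ℓ_1−1}(v_{i_1}+⋯+v_{i_k}) + ∑_{k=1}^{ℓ_2−1}(v_{j_1}+⋯+v_{j_k}) < ∑_{k=1}^{n−1}(v_1+⋯+v_k). -/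
open Finset

/-- `partialSums v S = ∑_{k=1}^{|S|-1} (v_{i_1} + ⋯ + v_{i_k})` where
`S = {i_1 < i_2 < ⋯ < i_ℓ}` is listed in increasing order. -/
noncomputable def partialSums (v : ℕ → ℝ) (S : Finset ℕ) : ℝ :=
  ∑ k : Fin (S.card - 1), ∑ t : Fin (k.1 + 1),
    v ((S.orderIsoOfFin rfl ⟨t.1, Nat.lt_of_lt_of_le t.isLt
        (by have := k.isLt; omega)⟩ : {x // x ∈ S}) : ℕ)

/-! For a block `S` whose `v`-sum vanishes, exchanging the order of summation gives
`partialSums v S = -∑_{i ∈ S} r_S(i) v_i`, where `r_S(i)` counts the elements of `S` below `i`.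
Since `r_{S₁ ∪ S₂} = r_{S₁} + r_{S₂}`, the right side minus the left side of the inequality
is `-∑_{(i,j) ∈ S₁ × S₂} v_{max(i,j)}`. As `v` is decreasing, `v_{max(i,j)} = min(v_i, v_j)`
is less than `(v_i + v_j) / 2`, while `v_i + v_j` sums to zero over `S₁ × S₂`. -/

theorem sum_range_sum_range_succ_eq_sum_mul {R : Type*} [CommRing R] (g : ℕ → R) (m : ℕ) :
    ∑ k ∈ range m, ∑ t ∈ range (k + 1), g t = ∑ t ∈ range m, ((m : R) - t) * g t := by
  induction m with
  | zero => simp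
  | succ m ih =>
    simp only [sum_range_succ _ m, ih, Nat.cast_add, Nat.cast_one, add_sub_right_comm _ (1 : R),
      add_mul, one_mul, sum_add_distrib, sub_self, zero_mul]
    ring

section OrderEmbOfFin

variable {α : Type*} [LinearOrder α]

theorem card_filter_lt_orderEmbOfFin (S : Finset α) (t : Fin S.card) :
    #{j ∈ S | j < S.orderEmbOfFin rfl t} = t := by
  calc #{j ∈ S | j < S.orderEmbOfFin rfl t}
      = #{j ∈ univ.map (S.orderEmbOfFin rfl).toEmbedding | j < S.orderEmbOfFin rfl t} := by
        rw [map_orderEmbOfFin_univ]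
    _ = #{s : Fin S.card | s < t} := by
        simp only [filter_map, card_map, Function.comp_def, RelEmbedding.coe_toEmbedding,
          OrderEmbedding.lt_iff_lt]
    _ = t := by rw [filter_gt_eq_Iio, Fin.card_Iio]

theorem sum_orderEmbOfFin {M : Type*} [AddCommMonoid M] (S : Finset α) (F : ℕ → α → M) :
    ∑ t : Fin S.card, F t (S.orderEmbOfFin rfl t) = ∑ i ∈ S, F #{j ∈ S | j < i} i := by
  calc ∑ t : Fin S.card, F t (S.orderEmbOfFin rfl t)
      = ∑ i ∈ univ.map (S.orderEmbOfFin rfl).toEmbedding, F #{j ∈ S | j < i} i := by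
        simp only [sum_map, RelEmbedding.coe_toEmbedding, card_filter_lt_orderEmbOfFin]
    _ = ∑ i ∈ S, F #{j ∈ S | j < i} i := by rw [map_orderEmbOfFin_univ]

end OrderEmbOfFin

theorem partialSums_eq_sum_mul (v : ℕ → ℝ) (S : Finset ℕ) :
    partialSums v S = ∑ i ∈ S, ((S.card : ℝ) - 1 - #{j ∈ S | j < i}) * v i := by
  rcases S.eq_empty_or_nonempty with rfl | hS
  · rfl
  obtain ⟨m, hm⟩ : ∃ m, S.card = m + 1 := ⟨S.card - 1, by have := hS.card_pos; omega⟩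
  set g : ℕ → ℝ := fun t ↦ if h : t < S.card then v (S.orderEmbOfFin rfl ⟨t, h⟩) else 0
  have hg : partialSums v S = ∑ k ∈ range (S.card - 1), ∑ t ∈ range (k + 1), g t := by
    simp only [partialSums, ← Fin.sum_univ_eq_sum_range]
    refine sum_congr rfl fun k _ ↦ sum_congr rfl fun t _ ↦ ?_
    have ht : t.1 < S.card := by omega
    simp only [g, dif_pos ht, coe_orderIsoOfFin_apply]
  have hFin : ∑ t : Fin S.card, ((S.card : ℝ) - 1 - t) * v (S.orderEmbOfFin rfl t)
      = ∑ t ∈ range S.card, ((S.card : ℝ) - 1 - t) * g t := by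
    simp [← Fin.sum_univ_eq_sum_range, g]
  rw [hg, sum_range_sum_range_succ_eq_sum_mul,
    ← sum_orderEmbOfFin S (fun t i ↦ ((S.card : ℝ) - 1 - t) * v i), hFin, hm,
    Nat.add_sub_cancel, sum_range_succ]
  simp

theorem partialSums_eq_neg_sum_mul (v : ℕ → ℝ) (S : Finset ℕ) (hS : ∑ i ∈ S, v i = 0) :
    partialSums v S = -∑ i ∈ S, (#{j ∈ S | j < i} : ℝ) * v i := by
  simp only [partialSums_eq_sum_mul, sub_mul, sum_sub_distrib, ← mul_sum, hS]
  ring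

section CrossRanks

variable {α R : Type*} [LinearOrder α] {s t : Finset α}

theorem card_filter_lt_union_of_disjoint (hst : Disjoint s t) (i : α) :
    #{j ∈ s ∪ t | j < i} = #{j ∈ s | j < i} + #{j ∈ t | j < i} := by
  rw [filter_union, card_union_of_disjoint (disjoint_filter_filter hst)]

theorem sum_card_filter_lt_mul_add_sum_card_filter_lt_mul [CommSemiring R] (hst : Disjoint s t)
    (v : α → R) :
    ∑ i ∈ s, (#{j ∈ t | j < i} : R) * v i + ∑ j ∈ t, (#{i ∈ s | i < j} : R) * v j
      = ∑ p ∈ s ×ˢ t, v (max p.1 p.2) := by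
  have h₁ : ∑ i ∈ s, (#{j ∈ t | j < i} : R) * v i
      = ∑ p ∈ s ×ˢ t, if p.2 < p.1 then v p.1 else 0 := by
    rw [sum_product]
    refine sum_congr rfl fun i _ ↦ ?_
    rw [← sum_filter]
    simp
  have h₂ : ∑ j ∈ t, (#{i ∈ s | i < j} : R) * v j
      = ∑ p ∈ s ×ˢ t, if p.1 < p.2 then v p.2 else 0 := by
    rw [sum_product_right]
    refine sum_congr rfl fun j _ ↦ ?_
    rw [← sum_filter]
    simp
  rw [h₁, h₂, ← sum_add_distrib]
  refine sum_congr rfl fun p hp ↦ ?_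
  obtain ⟨hp₁, hp₂⟩ := mem_product.mp hp
  rcases (disjoint_iff_ne.mp hst _ hp₁ _ hp₂).lt_or_gt with h | h
  · simp [h, h.not_gt, max_eq_right h.le]
  · simp [h, h.not_gt, max_eq_left h.le]

theorem sum_product_apply_max_neg [CommRing R] [LinearOrder R] [IsStrictOrderedRing R]
    {v : α → R} (hst : Disjoint s t) (hs : s.Nonempty) (ht : t.Nonempty)
    (hv : StrictAntiOn v ↑(s ∪ t))
    (hs₀ : ∑ i ∈ s, v i = 0) (ht₀ : ∑ j ∈ t, v j = 0) :
    ∑ p ∈ s ×ˢ t, v (max p.1 p.2) < 0 := by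
  have hpair : ∀ p ∈ s ×ˢ t, 2 * v (max p.1 p.2) < v p.1 + v p.2 := by
    intro p hp
    obtain ⟨hp₁, hp₂⟩ := mem_product.mp hp
    have hp₁' : p.1 ∈ (↑(s ∪ t) : Set α) := mem_coe.2 (mem_union_left _ hp₁)
    have hp₂' : p.2 ∈ (↑(s ∪ t) : Set α) := mem_coe.2 (mem_union_right _ hp₂)
    rcases (disjoint_iff_ne.mp hst _ hp₁ _ hp₂).lt_or_gt with h | h
    · have := hv hp₁' hp₂' h
      rw [max_eq_right h.le]; linarith
    · have := hv hp₂' hp₁' h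
      rw [max_eq_left h.le]; linarith
  have hsum : ∑ p ∈ s ×ˢ t, (v p.1 + v p.2) = 0 := by
    simp [sum_add_distrib, sum_product, ← mul_sum, hs₀, ht₀]
  have := sum_lt_sum_of_nonempty (hs.product ht) hpair
  rw [← mul_sum, hsum] at this
  linarith

end CrossRanks

theorem block_partial_sums_lt_general (n : ℕ) (v : ℕ → ℝ)
    (hdec : ∀ i j, i < j → j < n → v j < v i)
    (hsum : ∑ i ∈ Finset.range n, v i = 0)
    (S1 S2 : Finset ℕ) (hpart : S1 ∪ S2 = Finset.range n)
    (hdisj : Disjoint S1 S2)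
    (h1 : S1.Nonempty) (h2 : S2.Nonempty)
    (hs1 : ∑ i ∈ S1, v i = 0) (hs2 : ∑ i ∈ S2, v i = 0) :
    partialSums v S1 + partialSums v S2 < partialSums v (Finset.range n) := by
  have hv : StrictAntiOn v ↑(S1 ∪ S2) := by
    rw [hpart, coe_range]
    exact fun i _ j hj hij ↦ hdec i j hij hj
  have hcross := sum_product_apply_max_neg hdisj h1 h2 hv hs1 hs2
  rw [← sum_card_filter_lt_mul_add_sum_card_filter_lt_mul hdisj] at hcross
  rw [partialSums_eq_neg_sum_mul v S1 hs1, partialSums_eq_neg_sum_mul v S2 hs2,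
    partialSums_eq_neg_sum_mul v _ hsum, ← hpart, sum_union hdisj]
  simp only [card_filter_lt_union_of_disjoint hdisj, Nat.cast_add, add_mul, sum_add_distrib]
  linarith

theorem block_partial_sums_lt (n : ℕ) (hn : 2 ≤ n) (v : ℕ → ℝ)
    (hdec : ∀ i j, i < j → j < n → v j < v i)
    (hsum : ∑ i ∈ Finset.range n, v i = 0)
    (S1 S2 : Finset ℕ) (hpart : S1 ∪ S2 = Finset.range n)
    (hdisj : Disjoint S1 S2)
    (h1 : S1.Nonempty) (h2 : S2.Nonempty)
    (hs1 : ∑ i ∈ S1, v i = 0) (hs2 : ∑ i ∈ S2, v i = 0) :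
    partialSums v S1 + partialSums v S2 < partialSums v (Finset.range n) :=
  block_partial_sums_lt_general n v hdec hsum S1 S2 hpart hdisj h1 h2 hs1 hs2
end

section
/- Let v_1 > ⋯ > v_n be real, ∑ v_i = 0, and S_1 ⊔ S_2 a partition of {1,…,n} into nonempty blocks. Define D = ∑_{i<j, i and j in different blocks} v_i. If each block has v-sum zero, then 2D = ∑_{i<j, different blocks} (v_i − v_j), and in particular D > 0. -/
/-!
Write `A = ∑_{i<j, cross} v_i` and `B = ∑_{i<j, cross} v_j`. Since crossing is symmetric and
irreflexive, `A + B` is the sum of `v_i` over all ordered cross pairs, i.e.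
`|S₂| ∑_{S₁} v + |S₁| ∑_{S₂} v = 0`. Hence `2A = A - B = ∑_{i<j, cross} (v_i - v_j)`, a sum of
nonnegative terms containing the positive term of any pair `a ∈ S₁`, `b ∈ S₂`.
-/

open Finset

section PairSums

variable {ι M : Type*} [LinearOrder ι] [AddCommMonoid M] (s : Finset ι) (r : ι → ι → Prop)
  [DecidableRel r]

theorem sum_sum_ite_lt_add_sum_sum_ite_lt_swap (hsymm : ∀ i j, r i j → r j i)
    (hirr : ∀ i, ¬r i i) (f : ι → M) :
    (∑ i ∈ s, ∑ j ∈ s, if i < j ∧ r i j then f i else 0) +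
        (∑ i ∈ s, ∑ j ∈ s, if i < j ∧ r i j then f j else 0) =
      ∑ i ∈ s, ∑ j ∈ s, if r i j then f i else 0 := by
  rw [sum_comm (f := fun i j => if i < j ∧ r i j then f j else 0), ← sum_add_distrib]
  refine sum_congr rfl fun i _ => ?_
  rw [← sum_add_distrib]
  refine sum_congr rfl fun j _ => ?_
  rcases lt_trichotomy i j with h | rfl | h
  · simp [h, h.not_gt]
  · simp [hirr]
  · simp [h, h.not_gt, (⟨hsymm j i, hsymm i j⟩ : r j i ↔ r i j)]

theorem sum_sum_ite_lt_sub_pos {v : ι → ℝ} (hv : StrictAntiOn v s) (hsymm : ∀ i j, r i j → r j i)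
    {a b : ι} (ha : a ∈ s) (hb : b ∈ s) (hab : a ≠ b) (hr : r a b) :
    0 < ∑ i ∈ s, ∑ j ∈ s, if i < j ∧ r i j then v i - v j else 0 := by
  have hterm : ∀ i ∈ s, ∀ j ∈ s, 0 ≤ if i < j ∧ r i j then v i - v j else 0 := by
    intro i hi j hj
    split_ifs with h
    · exact sub_nonneg.mpr (hv hi hj h.1).le
    · exact le_rfl
  wlog hlt : a < b generalizing a b
  · exact this hb ha hab.symm (hsymm a b hr) ((Ne.lt_or_gt hab).resolve_left hlt)
  refine sum_pos' (fun i hi => sum_nonneg (hterm i hi)) ⟨a, ha, ?_⟩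
  refine sum_pos' (hterm a ha) ⟨b, hb, ?_⟩
  rw [if_pos ⟨hlt, hr⟩]
  exact sub_pos.mpr (hv ha hb hlt)

end PairSums

theorem sum_sum_ite_not_mem_iff {ι M : Type*} [DecidableEq ι] [AddCommMonoid M]
    {S T : Finset ι} (hST : Disjoint S T) (f : ι → M) :
    ∑ i ∈ S ∪ T, ∑ j ∈ S ∪ T, (if ¬(i ∈ S ↔ j ∈ S) then f i else 0) =
      #T • ∑ i ∈ S, f i + #S • ∑ i ∈ T, f i := by
  have hT : ∀ j ∈ T, j ∉ S := fun j hj hjS => disjoint_left.mp hST hjS hj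
  rw [sum_union hST, smul_sum, smul_sum]
  congr 1 <;> refine sum_congr rfl fun i hi => ?_ <;> rw [sum_union hST]
  · simp +contextual [hi, hT]
  · simp +contextual [hT i hi, hT]

theorem cross_block_sum_positive_general (n : ℕ) (v : ℕ → ℝ)
    (hdec : ∀ i j, i < j → j < n → v j < v i)
    (S1 S2 : Finset ℕ) (hpart : S1 ∪ S2 = Finset.range n)
    (hdisj : Disjoint S1 S2)
    (h1 : S1.Nonempty) (h2 : S2.Nonempty)
    (hs1 : ∑ i ∈ S1, v i = 0) (hs2 : ∑ i ∈ S2, v i = 0) :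
    2 * (∑ i ∈ Finset.range n, ∑ j ∈ Finset.range n,
          if i < j ∧ ¬(i ∈ S1 ↔ j ∈ S1) then v i else 0)
      = (∑ i ∈ Finset.range n, ∑ j ∈ Finset.range n,
          if i < j ∧ ¬(i ∈ S1 ↔ j ∈ S1) then v i - v j else 0) ∧
    0 < (∑ i ∈ Finset.range n, ∑ j ∈ Finset.range n,
          if i < j ∧ ¬(i ∈ S1 ↔ j ∈ S1) then v i else 0) := by
  have hsymm : ∀ i j, ¬(i ∈ S1 ↔ j ∈ S1) → ¬(j ∈ S1 ↔ i ∈ S1) := fun _ _ h h' => h h'.symm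
  have hcancel := sum_sum_ite_lt_add_sum_sum_ite_lt_swap (range n) _ hsymm (by simp) v
  rw [← hpart, sum_sum_ite_not_mem_iff hdisj, hs1, hs2, hpart, smul_zero, smul_zero, add_zero]
    at hcancel
  have hdiff : (∑ i ∈ range n, ∑ j ∈ range n,
      if i < j ∧ ¬(i ∈ S1 ↔ j ∈ S1) then v i - v j else 0) =
      (∑ i ∈ range n, ∑ j ∈ range n, if i < j ∧ ¬(i ∈ S1 ↔ j ∈ S1) then v i else 0) -
        ∑ i ∈ range n, ∑ j ∈ range n, if i < j ∧ ¬(i ∈ S1 ↔ j ∈ S1) then v j else 0 := by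
    simp only [← sum_sub_distrib, ite_sub_ite, sub_zero]
  obtain ⟨a, ha⟩ := h1
  obtain ⟨b, hb⟩ := h2
  have hbS1 : b ∉ S1 := disjoint_right.mp hdisj hb
  have hpos := sum_sum_ite_lt_sub_pos (range n) _ (v := v)
    (fun i _ j hj hij => hdec i j hij (mem_range.mp hj)) hsymm
    (hpart ▸ mem_union_left _ ha) (hpart ▸ mem_union_right _ hb)
    (ne_of_mem_of_not_mem ha hbS1) (by simp [ha, hbS1])
  constructor <;> linarith

theorem cross_block_sum_positive (n : ℕ) (hn : 2 ≤ n) (v : ℕ → ℝ)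
    (hdec : ∀ i j, i < j → j < n → v j < v i)
    (hsum : ∑ i ∈ Finset.range n, v i = 0)
    (S1 S2 : Finset ℕ) (hpart : S1 ∪ S2 = Finset.range n)
    (hdisj : Disjoint S1 S2)
    (h1 : S1.Nonempty) (h2 : S2.Nonempty)
    (hs1 : ∑ i ∈ S1, v i = 0) (hs2 : ∑ i ∈ S2, v i = 0) :
    2 * (∑ i ∈ Finset.range n, ∑ j ∈ Finset.range n,
          if i < j ∧ ¬(i ∈ S1 ↔ j ∈ S1) then v i else 0)
      = (∑ i ∈ Finset.range n, ∑ j ∈ Finset.range n,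
          if i < j ∧ ¬(i ∈ S1 ↔ j ∈ S1) then v i - v j else 0) ∧
    0 < (∑ i ∈ Finset.range n, ∑ j ∈ Finset.range n,
          if i < j ∧ ¬(i ∈ S1 ↔ j ∈ S1) then v i else 0) :=
  cross_block_sum_positive_general n v hdec S1 S2 hpart hdisj h1 h2 hs1 hs2
end

section
/- Let v_1 > ⋯ > v_n be real with ∑ v_i = 0, and m ∈ {±1}^n. For every ε > 0 there is T_1 > 0 such that for all T ≥ T_1 and all 1 ≤ i ≤ n, the coefficient b_i of q_{T}(x) = ∏_{j=1}^n (x − m_j e^{T v_j}) (with sign convention q_T(x) = ∑ (−1)^{n−k} b_{n−k} x^k) satisfies (1−ε) e^{T(v_1+⋯+v_i)} ≤ b_i M_i ≤ (1+ε) e^{T(v_1+⋯+v_i)}, where M_i = ∏_{j=1}^i m_j. -/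
/-!
Among the `i`-subsets `S` of `{0, …, n-1}`, the initial segment `range i` is the unique maximiser
of `∑_{j ∈ S} v j`, since `v` is strictly decreasing. Hence, after dividing `b_i M_i` by
`exp (T ∑_{j<i} v j)`, the term of `range i` is `M_i² = 1` and every other term decays
exponentially in `T`, so the quotient tends to `1`.
-/

open Finset Filter Topology Real

theorem Finset.sum_lt_sum_range_of_ne_range {M : Type*} [AddCommMonoid M] [LinearOrder M]
    [IsOrderedCancelAddMonoid M] {n : ℕ} {v : ℕ → M} (hv : StrictAntiOn v (Set.Iio n))
    {S : Finset ℕ} (hS : S ⊆ range n) (hne : S ≠ range #S) :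
    ∑ j ∈ S, v j < ∑ j ∈ range #S, v j := by
  set R := range #S
  have hcard : #(S \ R) = #(R \ S) := card_sdiff_comm (card_range _).symm
  obtain ⟨x, hx⟩ : (S \ R).Nonempty :=
    sdiff_nonempty.2 fun h => hne (eq_of_subset_of_card_le h (card_range _).le)
  have hRS : (R \ S).Nonempty := card_pos.1 (hcard ▸ card_pos.2 ⟨x, hx⟩)
  have hSn : #S < n := by
    have := mem_range.1 (hS (mem_sdiff.1 hx).1)
    have := not_lt.1 (mem_range.not.1 (mem_sdiff.1 hx).2)
    omega
  have h_extra : ∀ y ∈ S \ R, v y ≤ v #S := fun y hy =>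
    hv.antitoneOn hSn (mem_range.1 (hS (mem_sdiff.1 hy).1))
      (not_lt.1 (mem_range.not.1 (mem_sdiff.1 hy).2))
  have h_missing : ∀ y ∈ R \ S, v #S < v y := fun y hy =>
    hv ((mem_range.1 (mem_sdiff.1 hy).1).trans hSn) hSn (mem_range.1 (mem_sdiff.1 hy).1)
  have hdiff : ∑ j ∈ S \ R, v j < ∑ j ∈ R \ S, v j :=
    calc ∑ j ∈ S \ R, v j ≤ #(S \ R) • v #S := sum_le_card_nsmul _ _ _ h_extra
      _ = ∑ _j ∈ R \ S, v #S := by rw [sum_const, hcard]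
      _ < ∑ j ∈ R \ S, v j := sum_lt_sum_of_nonempty hRS h_missing
  rw [← sum_inter_add_sum_sdiff S R, ← sum_inter_add_sum_sdiff R S, inter_comm]
  exact add_lt_add_right hdiff _

theorem tendsto_sum_mul_exp_div_exp_of_lt {ι : Type*} {s : Finset ι} {k₀ : ι}
    (hk₀ : k₀ ∈ s) (c w : ι → ℝ) (hw : ∀ k ∈ s, k ≠ k₀ → w k < w k₀) :
    Tendsto (fun T => (∑ k ∈ s, c k * exp (T * w k)) / exp (T * w k₀)) atTop
      (𝓝 (c k₀)) := by
  classical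
  have hterm : ∀ k ∈ s, Tendsto (fun T => c k * exp (T * (w k - w k₀))) atTop
      (𝓝 (if k = k₀ then c k₀ else 0)) := by
    intro k hk
    by_cases hkk : k = k₀
    · subst hkk
      simp
    · have hexp := tendsto_exp_atBot.comp
        (tendsto_id.atTop_mul_const_of_neg (sub_neg.2 (hw k hk hkk)))
      simpa [hkk] using hexp.const_mul (c k)
  convert tendsto_finsetSum s hterm using 1
  · ext T
    rw [sum_div]
    refine sum_congr rfl fun k _ => ?_
    rw [mul_sub, exp_sub, mul_div_assoc]
  · rw [sum_ite_eq' s k₀, if_pos hk₀]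

theorem eventually_sum_mul_exp_mem_Icc {ι : Type*} {s : Finset ι} {k₀ : ι} (hk₀ : k₀ ∈ s)
    (c w : ι → ℝ) (hw : ∀ k ∈ s, k ≠ k₀ → w k < w k₀) (hc : c k₀ = 1) {ε : ℝ}
    (hε : 0 < ε) :
    ∀ᶠ T in atTop, (1 - ε) * exp (T * w k₀) ≤ ∑ k ∈ s, c k * exp (T * w k) ∧
      ∑ k ∈ s, c k * exp (T * w k) ≤ (1 + ε) * exp (T * w k₀) := by
  have hlim := tendsto_sum_mul_exp_div_exp_of_lt hk₀ c w hw
  rw [hc] at hlim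
  have hIcc : Set.Icc (1 - ε) (1 + ε) ∈ 𝓝 (1 : ℝ) :=
    Icc_mem_nhds (by linarith) (by linarith)
  filter_upwards [hlim.eventually hIcc] with T hT
  rwa [le_div_iff₀ (exp_pos _), div_le_iff₀ (exp_pos _)] at hT

theorem model_coefficient_bounds_general (n : ℕ) (v m : ℕ → ℝ)
    (hm : ∀ i < n, m i = 1 ∨ m i = -1)
    (hdec : ∀ i j, i < j → j < n → v j < v i)
    (ε : ℝ) (hε : 0 < ε) :
    ∃ T1 : ℝ, 0 < T1 ∧ ∀ T : ℝ, T1 ≤ T → ∀ i : ℕ, 1 ≤ i → i ≤ n →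
      (1 - ε) * Real.exp (T * ∑ j ∈ Finset.range i, v j)
        ≤ (∑ S ∈ Finset.powersetCard i (Finset.range n),
            (∏ j ∈ S, m j) * Real.exp (T * ∑ j ∈ S, v j)) *
          (∏ j ∈ Finset.range i, m j) ∧
      (∑ S ∈ Finset.powersetCard i (Finset.range n),
          (∏ j ∈ S, m j) * Real.exp (T * ∑ j ∈ S, v j)) *
        (∏ j ∈ Finset.range i, m j)
        ≤ (1 + ε) * Real.exp (T * ∑ j ∈ Finset.range i, v j) := by
  have hv : StrictAntiOn v (Set.Iio n) := fun i hi j hj hij => hdec i j hij hj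
  have hbound : ∀ i ≤ n, ∀ᶠ T in atTop,
      (1 - ε) * exp (T * ∑ j ∈ range i, v j) ≤
        (∑ S ∈ powersetCard i (range n), (∏ j ∈ S, m j) * exp (T * ∑ j ∈ S, v j)) *
          ∏ j ∈ range i, m j ∧
      (∑ S ∈ powersetCard i (range n), (∏ j ∈ S, m j) * exp (T * ∑ j ∈ S, v j)) *
          ∏ j ∈ range i, m j ≤ (1 + ε) * exp (T * ∑ j ∈ range i, v j) := by
    intro i hin
    have hR : range i ∈ powersetCard i (range n) :=
      mem_powersetCard.2 ⟨range_subset_range.2 hin, card_range i⟩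
    have hsign : (∏ j ∈ range i, m j) * ∏ j ∈ range i, m j = 1 := by
      rw [← prod_mul_distrib]
      refine prod_eq_one fun j hj => ?_
      rcases hm j ((mem_range.1 hj).trans_le hin) with h | h <;> simp [h]
    have hdom : ∀ S ∈ powersetCard i (range n), S ≠ range i →
        ∑ j ∈ S, v j < ∑ j ∈ range i, v j := fun S hS hne => by
      obtain ⟨hSn, rfl⟩ := mem_powersetCard.1 hS
      exact sum_lt_sum_range_of_ne_range hv hSn hne
    simpa only [sum_mul, mul_right_comm] using
      eventually_sum_mul_exp_mem_Icc hR (fun S => (∏ j ∈ S, m j) * ∏ j ∈ range i, m j)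
        (fun S => ∑ j ∈ S, v j) hdom hsign hε
  obtain ⟨T0, hT0⟩ := eventually_atTop.1
    ((eventually_all_finset (Iic n)).2 fun i hi => hbound i (mem_Iic.1 hi))
  exact ⟨max T0 1, by positivity, fun T hT i _ hin =>
    hT0 T (le_of_max_le_left hT) i (mem_Iic.2 hin)⟩

theorem model_coefficient_bounds (n : ℕ) (hn : 2 ≤ n) (v m : ℕ → ℝ)
    (hm : ∀ i < n, m i = 1 ∨ m i = -1)
    (hdec : ∀ i j, i < j → j < n → v j < v i)
    (hsum : ∑ i ∈ Finset.range n, v i = 0)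
    (ε : ℝ) (hε : 0 < ε) :
    ∃ T1 : ℝ, 0 < T1 ∧ ∀ T : ℝ, T1 ≤ T → ∀ i : ℕ, 1 ≤ i → i ≤ n →
      (1 - ε) * Real.exp (T * ∑ j ∈ Finset.range i, v j)
        ≤ (∑ S ∈ Finset.powersetCard i (Finset.range n),
            (∏ j ∈ S, m j) * Real.exp (T * ∑ j ∈ S, v j)) *
          (∏ j ∈ Finset.range i, m j) ∧
      (∑ S ∈ Finset.powersetCard i (Finset.range n),
          (∏ j ∈ S, m j) * Real.exp (T * ∑ j ∈ S, v j)) *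
        (∏ j ∈ Finset.range i, m j)
        ≤ (1 + ε) * Real.exp (T * ∑ j ∈ Finset.range i, v j) :=
  model_coefficient_bounds_general n v m hm hdec ε hε
end

section
/- Let v_1 > ⋯ > v_n be real with ∑ v_i = 0. For 1 ≤ i ≤ n−1 and 1 ≤ j ≤ n define Δ_{i,j} = (∑_{k<j} v_k + (n−j+1)v_j) − (v_1 + ⋯ + v_{n−i} + i·v_j). Then Δ_{i,j} ≥ 0 for all such i, j. -/
/-!
Writing `m = n - i`, the quantity is `F j - F (m + 1)` for the partial sums
`F b = ∑_{1 ≤ k < b} (v k - v j)`. Since `v` is decreasing, the increments of `F` are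
nonnegative before `j` and nonpositive from `j` on, so `F` is maximal at `b = j`.
-/

open Finset

theorem sum_Ico_le_sum_Ico_of_sign_change {M : Type*} [AddCommGroup M] [PartialOrder M]
    [IsOrderedAddMonoid M] (g : ℕ → M) {a j b : ℕ} (haj : a ≤ j)
    (hpos : ∀ k ∈ Ico a j, 0 ≤ g k) (hneg : ∀ k ∈ Ico j b, g k ≤ 0) :
    ∑ k ∈ Ico a b, g k ≤ ∑ k ∈ Ico a j, g k := by
  rcases le_total b j with hbj | hjb
  · rcases le_total a b with hab | hba
    · rw [← sum_Ico_consecutive g hab hbj, le_add_iff_nonneg_right]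
      exact sum_nonneg fun k hk => hpos k (by simp only [mem_Ico] at hk ⊢; omega)
    · rw [Ico_eq_empty_of_le hba, sum_empty]
      exact sum_nonneg hpos
  · rw [← sum_Ico_consecutive g haj hjb, add_le_iff_nonpos_right]
    exact sum_nonpos hneg

theorem Delta_nonneg_general (n : ℕ) (v : ℕ → ℝ)
    (hdec : ∀ i j, 1 ≤ i → i < j → j ≤ n → v j < v i)
    (i j : ℕ) (hi2 : i ≤ n - 1) (hj1 : 1 ≤ j) (hj2 : j ≤ n) :
    0 ≤ ((∑ k ∈ Finset.Ico 1 j, v k) + ((n : ℝ) - (j : ℝ) + 1) * v j)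
        - ((∑ k ∈ Finset.Icc 1 (n - i), v k) + (i : ℝ) * v j) := by
  have hpos : ∀ k ∈ Ico 1 j, 0 ≤ v k - v j := fun k hk => by
    simp only [mem_Ico] at hk
    linarith [hdec k j hk.1 hk.2 hj2]
  have hneg : ∀ k ∈ Ico j (n - i + 1), v k - v j ≤ 0 := fun k hk => by
    simp only [mem_Ico] at hk
    rcases hk.1.eq_or_lt with rfl | hjk
    · simp
    · linarith [hdec j k hj1 hjk (by omega)]
  have key := sum_Ico_le_sum_Ico_of_sign_change (fun k => v k - v j) hj1 hpos hneg
  simp only [sum_sub_distrib, sum_const, Nat.card_Ico, nsmul_eq_mul,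
    Ico_add_one_right_eq_Icc, Nat.card_Icc, Nat.add_sub_cancel] at key
  rw [Nat.cast_sub hj1, Nat.cast_sub (by omega : i ≤ n)] at key
  push_cast at key
  linarith

theorem Delta_nonneg (n : ℕ) (hn : 2 ≤ n) (v : ℕ → ℝ)
    (hdec : ∀ i j, 1 ≤ i → i < j → j ≤ n → v j < v i)
    (hsum : ∑ i ∈ Finset.Icc 1 n, v i = 0)
    (i j : ℕ) (hi1 : 1 ≤ i) (hi2 : i ≤ n - 1) (hj1 : 1 ≤ j) (hj2 : j ≤ n) :
    0 ≤ ((∑ k ∈ Finset.Ico 1 j, v k) + ((n : ℝ) - (j : ℝ) + 1) * v j)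
        - ((∑ k ∈ Finset.Icc 1 (n - i), v k) + (i : ℝ) * v j) :=
  Delta_nonneg_general n v hdec i j hi2 hj1 hj2
end

section
/- Let n ≥ 2 and v_1 > ⋯ > v_n real with ∑ v_i = 0, m ∈ {±1}^n, and set c_n = 10(n−1)2^{n−1}. For all sufficiently small ε > 0 there exists T_0 > 0 such that for all T ≥ T_0: any monic real polynomial p of degree n whose coefficients a_i (in the convention p(x) = ∑ (−1)^{n−i} a_{n−i} x^i) satisfy (1−ε)e^{T(v_1+⋯+v_i)} ≤ a_i M_i ≤ (1+ε)e^{T(v_1+⋯+v_i)} for all 1 ≤ i ≤ n (with M_i = ∏_{j≤i} m_j) has n distinct real roots x_1, …, x_n with |x_i − m_i e^{T v_i}| ≤ c_n ε e^{T v_i} for each i. -/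
/-!
Index the roots from `0`. Write `p.coeff (n - i) = (-1)^i M_i a_i` with `M_i = m_0 ⋯ m_{i-1}`,
so that `a_i = (1 + O(ε)) exp (T S_i)`, `S_i = v_0 + ⋯ + v_{i-1}`. At `x = m_j ρ` with `ρ` of
order `exp (T v_j)` the `i`-th term of `p x` has size about `exp (T (S_i + (n - i) v_j))`. Since
`v` decreases, this exponent is maximal exactly at `i = j` and `i = j + 1`, and every other term
is smaller by a factor `exp (-T g)`, where `g` is the least gap `v_i - v_k`. The two dominant
terms add up to `± ρ^(n-j-1) (a_j ρ - a_{j+1})`, and `a_j ρ - a_{j+1}` changes sign between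
`ρ = (1 - δ) exp (T v_j)` and `ρ = (1 + δ) exp (T v_j)` as soon as `δ ≥ 8ε`. For large `T` the
other terms cannot undo this, so the intermediate value theorem (in place of Rouché's theorem)
gives a real root within `δ exp (T v_j)` of `m_j exp (T v_j)`. As `exp (T v_i) > 3 exp (T v_j)`
for `i < j` and `δ ≤ 1/2`, these intervals are disjoint and the roots are distinct.
-/

open Finset Polynomial

lemma mul_pos_of_abs_sub_lt_abs {x a : ℝ} (h : |x - a| < |a|) : 0 < x * a := by
  cases abs_cases a <;> cases abs_cases (x - a) <;> nlinarith

lemma exists_eq_zero_mem_uIcc_of_mul_nonpos {f : ℝ → ℝ} {a b : ℝ}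
    (hf : ContinuousOn f (Set.uIcc a b)) (hab : f a * f b ≤ 0) :
    ∃ x ∈ Set.uIcc a b, f x = 0 := by
  have h0 : (0 : ℝ) ∈ Set.uIcc (f a) (f b) := by
    have := mul_nonpos_iff.1 hab
    rw [Set.mem_uIcc]
    tauto
  exact intermediate_value_uIcc hf h0

lemma abs_sum_sub_add_le_sum_erase_erase {ι : Type*} [DecidableEq ι] {s : Finset ι}
    {f : ι → ℝ} {i j : ι} (hi : i ∈ s) (hj : j ∈ s) (hij : i ≠ j) :
    |∑ k ∈ s, f k - (f i + f j)| ≤ ∑ k ∈ (s.erase i).erase j, |f k| := by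
  rw [← add_sum_erase s f hi, ← add_sum_erase _ f (mem_erase.2 ⟨hij.symm, hj⟩),
    ← add_assoc, add_sub_cancel_left]
  exact abs_sum_le_sum_abs _ _

lemma Polynomial.eval_eq_sum_range_coeff_sub_mul_pow {R : Type*} [Semiring R] {p : R[X]} {n : ℕ}
    (hp : p.natDegree ≤ n) (x : R) :
    p.eval x = ∑ i ∈ range (n + 1), p.coeff (n - i) * x ^ (n - i) := by
  rw [eval_eq_sum_range' (Nat.lt_succ_of_le hp), ← sum_range_reflect]
  simp

lemma injective_of_abs_sub_mul_le {ι : Type*} [LinearOrder ι] {x m e : ι → ℝ} {δ : ℝ}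
    (hm : ∀ i, |m i| = 1) (he : ∀ i, 0 < e i) (hδ : δ ≤ 1 / 2)
    (hsep : ∀ i j, i < j → 3 * e j < e i) (hx : ∀ i, |x i - m i * e i| ≤ δ * e i) :
    Function.Injective x := by
  have hanti : StrictAnti fun i => |x i| := fun i j hij => by
    have hj := abs_sub_abs_le_abs_sub (x j) (m j * e j)
    have hi := abs_sub_abs_le_abs_sub (m i * e i) (x i)
    rw [abs_sub_comm] at hi
    simp only [abs_mul, hm, one_mul, abs_of_pos (he _)] at hi hj
    nlinarith [hx i, hx j, hsep i j hij, he i, he j]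
  exact Function.Injective.of_comp (f := abs) hanti.injective

lemma exists_pos_forall_le_sub {n : ℕ} {v : ℕ → ℝ} (hv : ∀ i j, i < j → j < n → v j < v i) :
    ∃ g > 0, ∀ i j, i < j → j < n → g ≤ v i - v j := by
  set s := (range n ×ˢ range n).filter (fun q => q.1 < q.2)
  have hmem : ∀ i j, i < j → j < n → (i, j) ∈ s := fun i j hij hj => by
    simp [s, hij, hj, hij.trans hj]
  rcases s.eq_empty_or_nonempty with hs | hs
  · exact ⟨1, one_pos, fun i j hij hj => by simpa [hs] using hmem i j hij hj⟩
  · obtain ⟨q, hq, hmin⟩ := s.exists_min_image (fun q => v q.1 - v q.2) hs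
    simp only [s, mem_filter, mem_product, mem_range] at hq
    exact ⟨v q.1 - v q.2, sub_pos.2 (hv _ _ hq.2 hq.1.2),
      fun i j hij hj => hmin (i, j) (hmem i j hij hj)⟩

lemma sum_range_sub_add_le_of_ne {n : ℕ} {v : ℕ → ℝ} {g : ℝ} (hg : 0 ≤ g)
    (hv : ∀ i j, i < j → j < n → g ≤ v i - v j) {i j : ℕ} (hj : j < n) (hi : i ≤ n)
    (hij : i ≠ j) (hij' : i ≠ j + 1) :
    ∑ k ∈ range i, (v k - v j) + g ≤ ∑ k ∈ range j, (v k - v j) := by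
  rcases lt_or_gt_of_ne hij with h | h
  · have hle : g ≤ ∑ k ∈ Ico i j, (v k - v j) :=
      (hv i j h hj).trans <| single_le_sum (f := fun k => v k - v j)
        (fun k hk => hg.trans (hv k j (mem_Ico.1 hk).2 hj)) (mem_Ico.2 ⟨le_rfl, h⟩)
    rw [← sum_range_add_sum_Ico _ h.le]
    linarith
  · have hle : g ≤ ∑ k ∈ Ico (j + 1) i, (v j - v k) :=
      (hv j (j + 1) (by omega) (by omega)).trans <| single_le_sum (f := fun k => v j - v k)
        (fun k hk => hg.trans (hv j k (by simp at hk; omega) (by simp at hk; omega)))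
        (mem_Ico.2 ⟨le_rfl, by omega⟩)
    rw [← sum_range_add_sum_Ico _ (by omega : j + 1 ≤ i), sum_range_succ, sub_self, add_zero]
    have : ∑ k ∈ Ico (j + 1) i, (v k - v j) = -∑ k ∈ Ico (j + 1) i, (v j - v k) := by
      rw [← sum_neg_distrib]; simp
    linarith

lemma eventually_nonneg_and_lt_mul_exp_mul {g ε : ℝ} (hg : 0 < g) (hε : 0 < ε) (K : ℝ) :
    ∀ᶠ T in Filter.atTop, 0 ≤ T ∧ K < ε * Real.exp (T * g) :=
  (Filter.eventually_ge_atTop 0).and <| ((Real.tendsto_exp_atTop.comp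
    (Filter.tendsto_id.atTop_mul_const hg)).const_mul_atTop hε).eventually_gt_atTop K

lemma eight_le_mul_sub_one_mul_two_pow {n : ℕ} (hn : 2 ≤ n) :
    8 ≤ 10 * ((n : ℝ) - 1) * 2 ^ (n - 1) := by
  have h1 : (1 : ℝ) ≤ n - 1 := by
    have : (2 : ℝ) ≤ n := by exact_mod_cast hn
    linarith
  nlinarith [one_le_pow₀ (M₀ := ℝ) one_le_two (n := n - 1)]

lemma two_mul_le_mul_one_add_sub_and_mul_one_sub_sub_le {α β E e ε δ : ℝ} (hE : 0 < E)
    (he : 0 < e) (hε : 0 < ε) (hδ : 8 * ε ≤ δ) (hδ' : δ ≤ 1 / 2)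
    (hα : (1 - ε) * E ≤ α ∧ α ≤ (1 + ε) * E)
    (hβ : (1 - ε) * (E * e) ≤ β ∧ β ≤ (1 + ε) * (E * e)) :
    2 * ε * (E * e) ≤ α * (e * (1 + δ)) - β ∧ α * (e * (1 - δ)) - β ≤ -(2 * ε * (E * e)) := by
  constructor
  · nlinarith [mul_le_mul_of_nonneg_right hα.1 (by nlinarith : 0 ≤ e * (1 + δ)),
      mul_nonneg (mul_pos hE he).le (by nlinarith : 0 ≤ δ * (1 / 2 - ε) + (δ / 2 - 4 * ε))]
  · nlinarith [mul_le_mul_of_nonneg_right hα.2 (by nlinarith : 0 ≤ e * (1 - δ)),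
      mul_nonneg (mul_pos hE he).le (by nlinarith : 0 ≤ δ - 4 * ε + ε * δ)]

section

variable {n j : ℕ} {v m a : ℕ → ℝ} {p : ℝ[X]} {T ε g δ ρ : ℝ}

lemma exp_mul_pow_le_exp_neg_mul (hg : 0 ≤ g) (hv : ∀ i j, i < j → j < n → g ≤ v i - v j)
    (hT : 0 ≤ T) {i : ℕ} (hj : j < n) (hi : i ≤ n) (hij : i ≠ j) (hij' : i ≠ j + 1) :
    Real.exp (T * ∑ k ∈ range i, v k) * Real.exp (T * v j) ^ (n - i)
      ≤ Real.exp (-(T * g)) *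
        (Real.exp (T * ∑ k ∈ range (j + 1), v k) * Real.exp (T * v j) ^ (n - (j + 1))) := by
  have hgap := sum_range_sub_add_le_of_ne hg hv hj hi hij hij'
  simp only [sum_sub_distrib, sum_const, card_range, nsmul_eq_mul] at hgap
  simp only [← Real.exp_nat_mul, ← Real.exp_add, Real.exp_le_exp, Nat.cast_sub hi,
    Nat.cast_sub (hj : j + 1 ≤ n), sum_range_succ]
  push_cast
  nlinarith [mul_le_mul_of_nonneg_left hgap hT]

lemma three_mul_exp_lt_exp (hv : ∀ i j, i < j → j < n → g ≤ v i - v j) (hT : 0 ≤ T)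
    (hK : (n + 1) * 4 ^ n < ε * Real.exp (T * g)) (hε : ε ≤ 1) {i : ℕ} (hij : i < j)
    (hj : j < n) :
    3 * Real.exp (T * v j) < Real.exp (T * v i) := by
  have h3 : 3 < Real.exp (T * g) := by
    have hn : (2 : ℝ) ≤ n := by exact_mod_cast (show 2 ≤ n by omega)
    have h4 : (1 : ℝ) ≤ 4 ^ n := one_le_pow₀ (by norm_num)
    nlinarith [Real.exp_pos (T * g)]
  calc 3 * Real.exp (T * v j) < Real.exp (T * g) * Real.exp (T * v j) := by gcongr
    _ = Real.exp (T * g + T * v j) := (Real.exp_add _ _).symm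
    _ ≤ Real.exp (T * v i) := Real.exp_le_exp.2 (by nlinarith [hv i j hij hj])

lemma abs_prod_range_eq_one (hm : ∀ k < n, |m k| = 1) {i : ℕ} (hi : i ≤ n) :
    |∏ k ∈ range i, m k| = 1 := by
  rw [abs_prod]
  exact prod_eq_one fun k hk => hm k (by simp at hk; omega)

lemma coeff_eq_neg_one_pow_mul_prod_mul (hm : ∀ k < n, |m k| = 1) {i : ℕ} (hi : i ≤ n) :
    p.coeff (n - i) = (-1) ^ i * (∏ k ∈ range i, m k)
      * ((-1) ^ i * p.coeff (n - i) * ∏ k ∈ range i, m k) := by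
  have hs : ((-1 : ℝ) ^ i) ^ 2 = 1 := by
    rw [← sq_abs, abs_pow, abs_neg, abs_one, one_pow, one_pow]
  have hM : (∏ k ∈ range i, m k) ^ 2 = 1 := by
    rw [← sq_abs, abs_prod_range_eq_one hm hi, one_pow]
  linear_combination
    (-(p.coeff (n - i)) * (∏ k ∈ range i, m k) ^ 2) * hs - p.coeff (n - i) * hM

lemma coeff_bounds_of_monic (hmon : p.Monic) (hdeg : p.natDegree = n) (hε : 0 ≤ ε)
    (hp : ∀ i, 1 ≤ i → i ≤ n →
      (1 - ε) * Real.exp (T * ∑ k ∈ range i, v k)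
        ≤ (-1) ^ i * p.coeff (n - i) * ∏ k ∈ range i, m k ∧
      (-1) ^ i * p.coeff (n - i) * ∏ k ∈ range i, m k
        ≤ (1 + ε) * Real.exp (T * ∑ k ∈ range i, v k)) (i : ℕ) (hi : i ≤ n) :
    (1 - ε) * Real.exp (T * ∑ k ∈ range i, v k)
        ≤ (-1) ^ i * p.coeff (n - i) * ∏ k ∈ range i, m k ∧
      (-1) ^ i * p.coeff (n - i) * ∏ k ∈ range i, m k
        ≤ (1 + ε) * Real.exp (T * ∑ k ∈ range i, v k) := by
  rcases Nat.eq_zero_or_pos i with rfl | hi0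
  · simp only [← hdeg, hmon.coeff_natDegree, range_zero, sum_empty, prod_empty, pow_zero,
      mul_zero, Real.exp_zero, Nat.sub_zero, mul_one]
    constructor <;> linarith
  · exact hp i hi0 hi

def dominantPair (n j : ℕ) (m a : ℕ → ℝ) (ρ : ℝ) : ℝ :=
  (-1) ^ j * (∏ k ∈ range j, m k) * m j * (m j * ρ) ^ (n - (j + 1)) * (a j * ρ - a (j + 1))

lemma coeff_mul_pow_add_coeff_mul_pow_eq_dominantPair
    (hcoeff : ∀ i ≤ n, p.coeff (n - i) = (-1) ^ i * (∏ k ∈ range i, m k) * a i)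
    (hj : j < n) (ρ : ℝ) :
    p.coeff (n - j) * (m j * ρ) ^ (n - j) + p.coeff (n - (j + 1)) * (m j * ρ) ^ (n - (j + 1))
      = dominantPair n j m a ρ := by
  rw [dominantPair, hcoeff j hj.le, hcoeff (j + 1) hj, show n - j = n - (j + 1) + 1 by omega,
    prod_range_succ]
  ring

lemma abs_dominantPair (hm : ∀ k < n, |m k| = 1) (hj : j < n) (hρ : 0 ≤ ρ) :
    |dominantPair n j m a ρ| = ρ ^ (n - (j + 1)) * |a j * ρ - a (j + 1)| := by
  rw [dominantPair, abs_mul, abs_mul, abs_mul, abs_mul, abs_pow, abs_pow, abs_mul, hm j hj,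
    abs_prod_range_eq_one hm hj.le, abs_neg, abs_one, abs_of_nonneg hρ]
  ring

lemma dominantPair_mul_dominantPair_neg (hm : ∀ k < n, |m k| = 1) (hj : j < n) {ρ₁ ρ₂ : ℝ}
    (hρ₁ : 0 < ρ₁) (hρ₂ : 0 < ρ₂) (h₁ : 0 < a j * ρ₁ - a (j + 1))
    (h₂ : a j * ρ₂ - a (j + 1) < 0) :
    dominantPair n j m a ρ₁ * dominantPair n j m a ρ₂ < 0 := by
  have hc : ((-1) ^ j * (∏ k ∈ range j, m k) * m j) ^ 2 = 1 := by
    rw [← sq_abs, abs_mul, abs_mul, hm j hj, abs_prod_range_eq_one hm hj.le, abs_pow, abs_neg]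
    norm_num
  have hmj : m j ^ 2 = 1 := by rw [← sq_abs, hm j hj, one_pow]
  have hprod : dominantPair n j m a ρ₁ * dominantPair n j m a ρ₂
      = ((-1) ^ j * (∏ k ∈ range j, m k) * m j) ^ 2 * (m j ^ 2) ^ (n - (j + 1))
        * (ρ₁ * ρ₂) ^ (n - (j + 1)) * ((a j * ρ₁ - a (j + 1)) * (a j * ρ₂ - a (j + 1))) := by
    simp only [dominantPair]
    ring
  rw [hprod, hc, hmj, one_pow, one_mul, one_mul]
  exact mul_neg_of_pos_of_neg (by positivity) (mul_neg_of_pos_of_neg h₁ h₂)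

lemma abs_eval_sub_dominantPair_le (hp : p.natDegree ≤ n)
    (hcoeff : ∀ i ≤ n, p.coeff (n - i) = (-1) ^ i * (∏ k ∈ range i, m k) * a i)
    (hm : ∀ k < n, |m k| = 1) (ha : ∀ i ≤ n, |a i| ≤ 2 * Real.exp (T * ∑ k ∈ range i, v k))
    (hg : 0 ≤ g) (hv : ∀ i j, i < j → j < n → g ≤ v i - v j) (hT : 0 ≤ T) (hj : j < n)
    (hρ : 0 ≤ ρ) (hρ' : ρ ≤ 2 * Real.exp (T * v j)) :
    |p.eval (m j * ρ) - dominantPair n j m a ρ|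
      ≤ (n + 1) * (2 * 2 ^ n * (Real.exp (-(T * g)) *
        (Real.exp (T * ∑ k ∈ range (j + 1), v k) * Real.exp (T * v j) ^ (n - (j + 1))))) := by
  set Λ := Real.exp (T * ∑ k ∈ range (j + 1), v k) * Real.exp (T * v j) ^ (n - (j + 1))
  rw [eval_eq_sum_range_coeff_sub_mul_pow hp,
    ← coeff_mul_pow_add_coeff_mul_pow_eq_dominantPair hcoeff hj]
  refine (abs_sum_sub_add_le_sum_erase_erase (mem_range.2 (by omega)) (mem_range.2 (by omega))
    (by omega)).trans ((sum_le_card_nsmul _ _ (2 * 2 ^ n * (Real.exp (-(T * g)) * Λ))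
      fun i hi => ?_).trans ?_)
  · obtain ⟨hij', hij, hin⟩ : i ≠ j + 1 ∧ i ≠ j ∧ i < n + 1 := by simpa using hi
    have hin : i ≤ n := by omega
    calc |p.coeff (n - i) * (m j * ρ) ^ (n - i)| = |a i| * ρ ^ (n - i) := by
          rw [hcoeff i hin, abs_mul, abs_mul, abs_mul, abs_pow, abs_pow, abs_mul, hm j hj,
            abs_prod_range_eq_one hm hin, abs_neg, abs_one, abs_of_nonneg hρ]
          ring
      _ ≤ 2 * Real.exp (T * ∑ k ∈ range i, v k) * (2 * Real.exp (T * v j)) ^ (n - i) := by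
          gcongr
          exact ha i hin
      _ = 2 * 2 ^ (n - i) *
            (Real.exp (T * ∑ k ∈ range i, v k) * Real.exp (T * v j) ^ (n - i)) := by
          ring
      _ ≤ 2 * 2 ^ n * (Real.exp (-(T * g)) * Λ) := by
          gcongr 2 * ?_ * ?_
          · exact pow_le_pow_right₀ one_le_two (Nat.sub_le n i)
          · exact exp_mul_pow_le_exp_neg_mul hg hv hT hj hin hij hij'
  · rw [nsmul_eq_mul]
    gcongr
    exact_mod_cast (card_erase_le.trans card_erase_le).trans (card_range (n + 1)).le

lemma eval_mul_dominantPair_pos (hp : p.natDegree ≤ n)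
    (hcoeff : ∀ i ≤ n, p.coeff (n - i) = (-1) ^ i * (∏ k ∈ range i, m k) * a i)
    (hm : ∀ k < n, |m k| = 1) (ha : ∀ i ≤ n, |a i| ≤ 2 * Real.exp (T * ∑ k ∈ range i, v k))
    (hg : 0 ≤ g) (hv : ∀ i j, i < j → j < n → g ≤ v i - v j) (hT : 0 ≤ T) (hj : j < n)
    (hK : (n + 1) * 4 ^ n < ε * Real.exp (T * g))
    (hρ : Real.exp (T * v j) ≤ 2 * ρ) (hρ' : ρ ≤ 2 * Real.exp (T * v j))
    (hL : 2 * ε * Real.exp (T * ∑ k ∈ range (j + 1), v k) ≤ |a j * ρ - a (j + 1)|) :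
    0 < p.eval (m j * ρ) * dominantPair n j m a ρ := by
  have hρ0 : 0 < ρ := by linarith [Real.exp_pos (T * v j)]
  apply mul_pos_of_abs_sub_lt_abs
  refine (abs_eval_sub_dominantPair_le hp hcoeff hm ha hg hv hT hj hρ0.le hρ').trans_lt ?_
  rw [abs_dominantPair hm hj hρ0.le]
  set e := Real.exp (T * v j)
  set E := Real.exp (T * ∑ k ∈ range (j + 1), v k)
  set N := n - (j + 1)
  have hsmall : (n + 1) * 4 ^ n * Real.exp (-(T * g)) < ε := by
    rwa [Real.exp_neg, ← div_eq_mul_inv, div_lt_iff₀ (Real.exp_pos _)]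
  have he : e ^ N ≤ 2 ^ n * ρ ^ N := calc
    e ^ N ≤ (2 * ρ) ^ N := pow_le_pow_left₀ (Real.exp_pos _).le hρ N
    _ = 2 ^ N * ρ ^ N := mul_pow _ _ _
    _ ≤ 2 ^ n * ρ ^ N := by gcongr; exacts [one_le_two, Nat.sub_le n _]
  calc (n + 1) * (2 * 2 ^ n * (Real.exp (-(T * g)) * (E * e ^ N)))
      ≤ (n + 1) * (2 * 2 ^ n * (Real.exp (-(T * g)) * (E * (2 ^ n * ρ ^ N)))) := by gcongr
    _ = 2 * E * ρ ^ N * ((n + 1) * 4 ^ n * Real.exp (-(T * g))) := by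
      rw [show (4 : ℝ) ^ n = 2 ^ n * 2 ^ n by rw [← mul_pow]; norm_num]
      ring
    _ < 2 * E * ρ ^ N * ε := by gcongr
    _ = ρ ^ N * (2 * ε * E) := by ring
    _ ≤ ρ ^ N * |a j * ρ - a (j + 1)| := by gcongr

lemma eval_mul_eval_nonpos (hp : p.natDegree ≤ n)
    (hcoeff : ∀ i ≤ n, p.coeff (n - i) = (-1) ^ i * (∏ k ∈ range i, m k) * a i)
    (hm : ∀ k < n, |m k| = 1)
    (ha : ∀ i ≤ n, (1 - ε) * Real.exp (T * ∑ k ∈ range i, v k) ≤ a i ∧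
      a i ≤ (1 + ε) * Real.exp (T * ∑ k ∈ range i, v k))
    (hg : 0 ≤ g) (hv : ∀ i j, i < j → j < n → g ≤ v i - v j) (hT : 0 ≤ T) (hj : j < n)
    (hε : 0 < ε) (hK : (n + 1) * 4 ^ n < ε * Real.exp (T * g)) (hδ : 8 * ε ≤ δ)
    (hδ' : δ ≤ 1 / 2) :
    p.eval (m j * (Real.exp (T * v j) * (1 - δ))) * p.eval (m j * (Real.exp (T * v j) * (1 + δ)))
      ≤ 0 := by
  set e := Real.exp (T * v j)
  have he : 0 < e := Real.exp_pos _
  have ha' : ∀ i ≤ n, |a i| ≤ 2 * Real.exp (T * ∑ k ∈ range i, v k) := fun i hi => by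
    have := Real.exp_pos (T * ∑ k ∈ range i, v k)
    rw [abs_le]
    constructor <;> nlinarith [ha i hi]
  have hE : Real.exp (T * ∑ k ∈ range (j + 1), v k) = Real.exp (T * ∑ k ∈ range j, v k) * e := by
    rw [sum_range_succ, mul_add, Real.exp_add]
  obtain ⟨hL_plus, hL_minus⟩ := two_mul_le_mul_one_add_sub_and_mul_one_sub_sub_le
    (Real.exp_pos _) he hε hδ hδ' (ha j hj.le) (hE ▸ ha (j + 1) hj)
  rw [← hE] at hL_plus hL_minus
  have h_plus := eval_mul_dominantPair_pos hp hcoeff hm ha' hg hv hT hj hK (ρ := e * (1 + δ))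
    (by nlinarith) (by nlinarith) (hL_plus.trans (le_abs_self _))
  have h_minus := eval_mul_dominantPair_pos hp hcoeff hm ha' hg hv hT hj hK (ρ := e * (1 - δ))
    (by nlinarith) (by nlinarith) (le_abs.2 (Or.inr (by linarith)))
  have hpair := dominantPair_mul_dominantPair_neg (a := a) hm hj
    (mul_pos he (by linarith : (0 : ℝ) < 1 + δ)) (mul_pos he (by linarith : (0 : ℝ) < 1 - δ))
    (by nlinarith [Real.exp_pos (T * ∑ k ∈ range (j + 1), v k)])
    (by nlinarith [Real.exp_pos (T * ∑ k ∈ range (j + 1), v k)])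
  nlinarith [mul_pos h_plus h_minus]

lemma exists_eval_eq_zero_abs_sub_le (hp : p.natDegree ≤ n)
    (hcoeff : ∀ i ≤ n, p.coeff (n - i) = (-1) ^ i * (∏ k ∈ range i, m k) * a i)
    (hm : ∀ k < n, |m k| = 1)
    (ha : ∀ i ≤ n, (1 - ε) * Real.exp (T * ∑ k ∈ range i, v k) ≤ a i ∧
      a i ≤ (1 + ε) * Real.exp (T * ∑ k ∈ range i, v k))
    (hg : 0 ≤ g) (hv : ∀ i j, i < j → j < n → g ≤ v i - v j) (hT : 0 ≤ T) (hj : j < n)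
    (hε : 0 < ε) (hK : (n + 1) * 4 ^ n < ε * Real.exp (T * g)) (hδ : 8 * ε ≤ δ)
    (hδ' : δ ≤ 1 / 2) :
    ∃ x, p.eval x = 0 ∧ |x - m j * Real.exp (T * v j)| ≤ δ * Real.exp (T * v j) := by
  set e := Real.exp (T * v j)
  obtain ⟨x, hx, hx0⟩ := exists_eq_zero_mem_uIcc_of_mul_nonpos p.continuous.continuousOn
    (eval_mul_eval_nonpos hp hcoeff hm ha hg hv hT hj hε hK hδ hδ')
  refine ⟨x, hx0, abs_sub_le_iff.2 ?_⟩
  have hδe : 0 ≤ δ * e := mul_nonneg (by linarith) (Real.exp_pos _).le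
  obtain ⟨hm₁, hm₂⟩ := abs_le.1 (hm j hj).le
  have hm₁' := mul_nonneg (neg_le_iff_add_nonneg.1 hm₁) hδe
  have hm₂' := mul_nonneg (sub_nonneg.2 hm₂) hδe
  have hI : Set.uIcc (m j * (e * (1 - δ))) (m j * (e * (1 + δ)))
      ⊆ Set.Icc (m j * e - δ * e) (m j * e + δ * e) :=
    Set.ordConnected_Icc.uIcc_subset ⟨by nlinarith, by nlinarith⟩ ⟨by nlinarith, by nlinarith⟩
  obtain ⟨hx₁, hx₂⟩ := hI hx
  constructor <;> linarith

end

theorem root_approximation_general (n : ℕ) (hn : 2 ≤ n) (v m : ℕ → ℝ)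
    (hdec : ∀ i j, i < j → j < n → v j < v i)
    (hm : ∀ i < n, m i = 1 ∨ m i = -1) :
    ∃ ε0 : ℝ, 0 < ε0 ∧ ∀ ε : ℝ, 0 < ε → ε ≤ ε0 →
      ∃ T0 : ℝ, 0 < T0 ∧ ∀ T : ℝ, T0 ≤ T →
        ∀ p : Polynomial ℝ, p.Monic → p.natDegree = n →
          (∀ i : ℕ, 1 ≤ i → i ≤ n →
            (1 - ε) * Real.exp (T * ∑ j ∈ Finset.range i, v j)
              ≤ ((-1 : ℝ) ^ i * p.coeff (n - i)) * ∏ j ∈ Finset.range i, m j ∧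
            ((-1 : ℝ) ^ i * p.coeff (n - i)) * ∏ j ∈ Finset.range i, m j
              ≤ (1 + ε) * Real.exp (T * ∑ j ∈ Finset.range i, v j)) →
          ∃ x : Fin n → ℝ, Function.Injective x ∧
            (∀ i : Fin n, p.eval (x i) = 0) ∧
            ∀ i : Fin n,
              |x i - m i * Real.exp (T * v i)|
                ≤ (10 * ((n : ℝ) - 1) * 2 ^ (n - 1)) * ε * Real.exp (T * v i) := by
  obtain ⟨g, hg, hv⟩ := exists_pos_forall_le_sub hdec
  have hm' : ∀ k < n, |m k| = 1 := fun k hk => by rcases hm k hk with h | h <;> simp [h]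
  set c : ℝ := 10 * ((n : ℝ) - 1) * 2 ^ (n - 1)
  have hc : 8 ≤ c := eight_le_mul_sub_one_mul_two_pow hn
  refine ⟨1 / (2 * c), by positivity, fun ε hε hεc => ?_⟩
  have hδ : 8 * ε ≤ c * ε := by nlinarith
  have hδ' : c * ε ≤ 1 / 2 := calc
    c * ε ≤ c * (1 / (2 * c)) := by gcongr
    _ = 1 / 2 := by field_simp
  obtain ⟨T0, hT0⟩ := Filter.eventually_atTop.1
    (eventually_nonneg_and_lt_mul_exp_mul hg hε ((n + 1) * 4 ^ n))
  refine ⟨max T0 1, by positivity, fun T hT p hmon hdeg hp => ?_⟩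
  obtain ⟨hT, hK⟩ := hT0 T (le_of_max_le_left hT)
  choose x hx0 hx using fun i : Fin n => exists_eval_eq_zero_abs_sub_le hdeg.le
    (fun i hi => coeff_eq_neg_one_pow_mul_prod_mul hm' hi) hm'
    (coeff_bounds_of_monic hmon hdeg hε.le hp) hg.le hv hT i.2 hε hK hδ hδ'
  refine ⟨x, injective_of_abs_sub_mul_le (fun i => hm' i i.2) (fun _ => Real.exp_pos _) hδ'
    (fun i j hij => three_mul_exp_lt_exp hv hT hK (by linarith) hij j.2) hx, hx0, hx⟩

theorem root_approximation (n : ℕ) (hn : 2 ≤ n) (v m : ℕ → ℝ)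
    (hdec : ∀ i j, i < j → j < n → v j < v i)
    (hsum : ∑ i ∈ Finset.range n, v i = 0)
    (hm : ∀ i < n, m i = 1 ∨ m i = -1) :
    ∃ ε0 : ℝ, 0 < ε0 ∧ ∀ ε : ℝ, 0 < ε → ε ≤ ε0 →
      ∃ T0 : ℝ, 0 < T0 ∧ ∀ T : ℝ, T0 ≤ T →
        ∀ p : Polynomial ℝ, p.Monic → p.natDegree = n →
          (∀ i : ℕ, 1 ≤ i → i ≤ n →
            (1 - ε) * Real.exp (T * ∑ j ∈ Finset.range i, v j)
              ≤ ((-1 : ℝ) ^ i * p.coeff (n - i)) * ∏ j ∈ Finset.range i, m j ∧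
            ((-1 : ℝ) ^ i * p.coeff (n - i)) * ∏ j ∈ Finset.range i, m j
              ≤ (1 + ε) * Real.exp (T * ∑ j ∈ Finset.range i, v j)) →
          ∃ x : Fin n → ℝ, Function.Injective x ∧
            (∀ i : Fin n, p.eval (x i) = 0) ∧
            ∀ i : Fin n,
              |x i - m i * Real.exp (T * v i)|
                ≤ (10 * ((n : ℝ) - 1) * 2 ^ (n - 1)) * ε * Real.exp (T * v i) :=
  root_approximation_general n hn v m hdec hm
end

section
/- Let m_1, …, m_n ∈ {±1}, v_1 > ⋯ > v_n real, c_n ε ≤ 1/4, and T large enough that e^{T v_j} ≥ 2 e^{T v_{j+1}} for all j < n. Then the closed discs D_j = {x ∈ ℂ : |x − m_j e^{T v_j}| ≤ c_n ε e^{T v_j}}, 1 ≤ j ≤ n, are pairwise disjoint, and for x ∈ ∂D_j one has ∏_{i=1}^n |x − m_i e^{T v_i}| ≥ c_n ε (1/2 − c_n ε)^{n−1} e^{T(∑_{i<j} v_i) + (n−j+1)T v_j}. -/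
open Finset

/-!
Write `a i = e^{T v_i}` and `ρ = c_n ε`. The gap condition iterates to `2 a k ≤ a i` for `i < k`,
and since `|m_i| = 1` the reverse triangle inequality separates the centres by at least
`a i - a k ≥ a i / 2`, which exceeds the sum `ρ (a i + a k)` of the radii. For `x` on `∂D_j`, the
triangle inequality through the centre of `D_j` bounds each factor `|x - m_i a i|`, `i ≠ j`, below
by `(1/2 - ρ)` times the larger of `a i`, `a j`; the product of these bounds is the claim.
-/

theorem prod_Icc_eq_prod_Ico_mul_mul_prod_Ioc {M : Type*} [CommMonoid M] (f : ℕ → M)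
    {a j n : ℕ} (haj : a ≤ j) (hjn : j ≤ n) :
    ∏ i ∈ Icc a n, f i = (∏ i ∈ Ico a j, f i) * f j * ∏ i ∈ Ioc j n, f i := by
  rw [← Ico_add_one_right_eq_Icc, ← prod_Ico_consecutive f haj (by omega : j ≤ n + 1),
    Ico_add_one_right_eq_Icc, ← mul_prod_Ioc_eq_prod_Icc hjn, mul_assoc]

theorem Real.exp_mul_sum_add_natCast_mul (s : Finset ℕ) (v : ℕ → ℝ) (k : ℕ) (T w : ℝ) :
    Real.exp (T * ∑ i ∈ s, v i + k * T * w)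
      = (∏ i ∈ s, Real.exp (T * v i)) * Real.exp (T * w) ^ k := by
  rw [Real.exp_add, mul_sum, Real.exp_sum, ← Real.exp_nat_mul, mul_assoc]

theorem two_mul_le_of_two_mul_succ_le {a : ℕ → ℝ} {n : ℕ} (ha : ∀ i, 0 ≤ a i)
    (hgap : ∀ j, 1 ≤ j → j < n → 2 * a (j + 1) ≤ a j) {i k : ℕ} (hi : 1 ≤ i) (hik : i < k)
    (hk : k ≤ n) : 2 * a k ≤ a i := by
  induction k, hik using Nat.le_induction with
  | base => exact hgap i hi hk
  | succ k hik ih => linarith [hgap k (by omega) hk, ih (by omega), ha k]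

theorem sub_le_dist_ofReal_mul {s t a b : ℝ} (hs : |s| = 1) (ht : |t| = 1) (ha : 0 ≤ a)
    (hb : 0 ≤ b) : a - b ≤ dist ((s * a : ℝ) : ℂ) ((t * b : ℝ) : ℂ) := by
  rw [Complex.dist_eq, ← Complex.ofReal_sub, Complex.norm_real, Real.norm_eq_abs]
  calc a - b = |s * a| - |t * b| := by
        rw [abs_mul, abs_mul, hs, ht, abs_of_nonneg ha, abs_of_nonneg hb, one_mul, one_mul]
    _ ≤ |s * a - t * b| := abs_sub_abs_le_abs_sub _ _

section MetricSpace

variable {X : Type*} [PseudoMetricSpace X]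

theorem disjoint_closedBall_mul_of_two_mul_le {x y : X} {a b ρ : ℝ} (hsep : a - b ≤ dist x y)
    (hab : 2 * b ≤ a) (hb : 0 < b) (hρ : ρ ≤ 1 / 4) :
    Disjoint (Metric.closedBall x (ρ * a)) (Metric.closedBall y (ρ * b)) := by
  apply Metric.closedBall_disjoint_closedBall
  nlinarith [mul_le_mul_of_nonneg_right hρ (by linarith : 0 ≤ a + b)]

theorem half_sub_dist_le_dist {x y z : X} {A B : ℝ} (hsep : A - B ≤ dist y z)
    (hAB : 2 * B ≤ A) : A / 2 - dist x z ≤ dist x y := by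
  linarith [dist_triangle y x z, dist_comm x y]

theorem le_prod_dist_of_dist_eq {c : ℕ → X} {a : ℕ → ℝ} {n j : ℕ} {ρ : ℝ} {x : X}
    (ha : ∀ i, 0 < a i) (hgap : ∀ i k, 1 ≤ i → i < k → k ≤ n → 2 * a k ≤ a i)
    (hsep : ∀ i ∈ Icc 1 n, ∀ k ∈ Icc 1 n, a i - a k ≤ dist (c i) (c k)) (hρ : ρ ≤ 1 / 2)
    (hj : j ∈ Icc 1 n) (hx : dist x (c j) = ρ * a j) :
    ρ * (1 / 2 - ρ) ^ (n - 1) * ((∏ i ∈ Ico 1 j, a i) * a j ^ (n - j + 1))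
      ≤ ∏ i ∈ Icc 1 n, dist x (c i) := by
  obtain ⟨hj1, hjn⟩ := mem_Icc.1 hj
  have hρ0 : 0 ≤ ρ := nonneg_of_mul_nonneg_left (hx ▸ dist_nonneg) (ha j)
  have hbefore : ∀ i ∈ Ico 1 j, (1 / 2 - ρ) * a i ≤ dist x (c i) := by
    intro i hi
    obtain ⟨hi1, hij⟩ := mem_Ico.1 hi
    have := half_sub_dist_le_dist (x := x) (hsep i (mem_Icc.2 ⟨hi1, by omega⟩) j hj)
      (hgap i j hi1 hij hjn)
    have : ρ * a j ≤ ρ * a i :=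
      mul_le_mul_of_nonneg_left (by linarith [ha j, hgap i j hi1 hij hjn]) hρ0
    linarith
  have hafter : ∀ i ∈ Ioc j n, (1 / 2 - ρ) * a j ≤ dist x (c i) := by
    intro i hi
    obtain ⟨hji, hin⟩ := mem_Ioc.1 hi
    have := half_sub_dist_le_dist (x := x) (hsep j hj i (mem_Icc.2 ⟨by omega, hin⟩))
      (hgap j i hj1 hji hin)
    linarith
  calc ρ * (1 / 2 - ρ) ^ (n - 1) * ((∏ i ∈ Ico 1 j, a i) * a j ^ (n - j + 1))
      = (∏ i ∈ Ico 1 j, (1 / 2 - ρ) * a i) * (ρ * a j) * ∏ i ∈ Ioc j n, (1 / 2 - ρ) * a j := by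
        rw [prod_mul_distrib, prod_const, prod_const, Nat.card_Ico, Nat.card_Ioc,
          show n - 1 = (j - 1) + (n - j) by omega, pow_add, mul_pow]
        ring
    _ ≤ (∏ i ∈ Ico 1 j, dist x (c i)) * dist x (c j) * ∏ i ∈ Ioc j n, dist x (c i) := by
        have hfactor : ∀ i, 0 ≤ (1 / 2 - ρ) * a i := fun i => mul_nonneg (by linarith) (ha i).le
        gcongr with i hi i hi
        · exact prod_nonneg fun _ _ => hfactor j
        · exact mul_nonneg hρ0 (ha j).le
        · exact fun i _ => hfactor i
        · exact hbefore i hi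
        · exact hx.ge
        · exact fun _ _ => hfactor j
        · exact hafter i hi
    _ = ∏ i ∈ Icc 1 n, dist x (c i) := (prod_Icc_eq_prod_Ico_mul_mul_prod_Ioc _ hj1 hjn).symm

end MetricSpace

theorem discs_disjoint_and_lower_bound_general (n : ℕ) (v m : ℕ → ℝ)
    (hm : ∀ i, 1 ≤ i → i ≤ n → m i = 1 ∨ m i = -1)
    (ε : ℝ)
    (hsmall : (10 * ((n : ℝ) - 1) * 2 ^ (n - 1)) * ε ≤ 1 / 4)
    (T : ℝ)
    (hgap : ∀ j, 1 ≤ j → j < n →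
      2 * Real.exp (T * v (j + 1)) ≤ Real.exp (T * v j)) :
    (∀ j ∈ Finset.Icc 1 n, ∀ k ∈ Finset.Icc 1 n, j ≠ k →
      Disjoint
        (Metric.closedBall ((m j * Real.exp (T * v j) : ℝ) : ℂ)
          ((10 * ((n : ℝ) - 1) * 2 ^ (n - 1)) * ε * Real.exp (T * v j)))
        (Metric.closedBall ((m k * Real.exp (T * v k) : ℝ) : ℂ)
          ((10 * ((n : ℝ) - 1) * 2 ^ (n - 1)) * ε * Real.exp (T * v k)))) ∧
    (∀ j ∈ Finset.Icc 1 n,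
      ∀ x ∈ Metric.sphere ((m j * Real.exp (T * v j) : ℝ) : ℂ)
          ((10 * ((n : ℝ) - 1) * 2 ^ (n - 1)) * ε * Real.exp (T * v j)),
        (10 * ((n : ℝ) - 1) * 2 ^ (n - 1)) * ε *
            (1 / 2 - (10 * ((n : ℝ) - 1) * 2 ^ (n - 1)) * ε) ^ (n - 1) *
            Real.exp (T * (∑ i ∈ Finset.Ico 1 j, v i)
              + ((n : ℝ) - (j : ℝ) + 1) * T * v j)
          ≤ ∏ i ∈ Finset.Icc 1 n,
              ‖x - ((m i * Real.exp (T * v i) : ℝ) : ℂ)‖) := by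
  set ρ := (10 * ((n : ℝ) - 1) * 2 ^ (n - 1)) * ε
  set a : ℕ → ℝ := fun i => Real.exp (T * v i)
  set c : ℕ → ℂ := fun i => ((m i * a i : ℝ) : ℂ)
  have ha (i : ℕ) : 0 < a i := Real.exp_pos _
  have hchain (i k : ℕ) : 1 ≤ i → i < k → k ≤ n → 2 * a k ≤ a i :=
    two_mul_le_of_two_mul_succ_le (fun i => (ha i).le) hgap
  have hsep : ∀ i ∈ Icc 1 n, ∀ k ∈ Icc 1 n, a i - a k ≤ dist (c i) (c k) := by
    intro i hi k hk
    have habs {l : ℕ} (hl : l ∈ Icc 1 n) : |m l| = 1 := by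
      rcases hm l (mem_Icc.1 hl).1 (mem_Icc.1 hl).2 with h | h <;> simp [h]
    exact sub_le_dist_ofReal_mul (habs hi) (habs hk) (ha i).le (ha k).le
  refine ⟨fun j hj k hk hjk => ?_, fun j hj x hx => ?_⟩
  · rcases hjk.lt_or_gt with h | h
    · exact disjoint_closedBall_mul_of_two_mul_le (hsep j hj k hk)
        (hchain j k (mem_Icc.1 hj).1 h (mem_Icc.1 hk).2) (ha k) hsmall
    · exact (disjoint_closedBall_mul_of_two_mul_le (hsep k hk j hj)
        (hchain k j (mem_Icc.1 hk).1 h (mem_Icc.1 hj).2) (ha j) hsmall).symm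
  · have hcast : (n : ℝ) - j + 1 = ((n - j + 1 : ℕ) : ℝ) := by
      push_cast [Nat.cast_sub (mem_Icc.1 hj).2]
      ring
    simp_rw [← dist_eq_norm]
    rw [hcast, Real.exp_mul_sum_add_natCast_mul]
    exact le_prod_dist_of_dist_eq ha hchain hsep (by linarith) hj (Metric.mem_sphere.1 hx)

theorem discs_disjoint_and_lower_bound (n : ℕ) (hn : 1 ≤ n) (v m : ℕ → ℝ)
    (hm : ∀ i, 1 ≤ i → i ≤ n → m i = 1 ∨ m i = -1)
    (hdec : ∀ i j, 1 ≤ i → i < j → j ≤ n → v j < v i)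
    (ε : ℝ) (hε : 0 < ε)
    (hsmall : (10 * ((n : ℝ) - 1) * 2 ^ (n - 1)) * ε ≤ 1 / 4)
    (T : ℝ)
    (hgap : ∀ j, 1 ≤ j → j < n →
      2 * Real.exp (T * v (j + 1)) ≤ Real.exp (T * v j)) :
    (∀ j ∈ Finset.Icc 1 n, ∀ k ∈ Finset.Icc 1 n, j ≠ k →
      Disjoint
        (Metric.closedBall ((m j * Real.exp (T * v j) : ℝ) : ℂ)
          ((10 * ((n : ℝ) - 1) * 2 ^ (n - 1)) * ε * Real.exp (T * v j)))
        (Metric.closedBall ((m k * Real.exp (T * v k) : ℝ) : ℂ)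
          ((10 * ((n : ℝ) - 1) * 2 ^ (n - 1)) * ε * Real.exp (T * v k)))) ∧
    (∀ j ∈ Finset.Icc 1 n,
      ∀ x ∈ Metric.sphere ((m j * Real.exp (T * v j) : ℝ) : ℂ)
          ((10 * ((n : ℝ) - 1) * 2 ^ (n - 1)) * ε * Real.exp (T * v j)),
        (10 * ((n : ℝ) - 1) * 2 ^ (n - 1)) * ε *
            (1 / 2 - (10 * ((n : ℝ) - 1) * 2 ^ (n - 1)) * ε) ^ (n - 1) *
            Real.exp (T * (∑ i ∈ Finset.Ico 1 j, v i)
              + ((n : ℝ) - (j : ℝ) + 1) * T * v j)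
          ≤ ∏ i ∈ Finset.Icc 1 n,
              ‖x - ((m i * Real.exp (T * v i) : ℝ) : ℂ)‖) :=
  discs_disjoint_and_lower_bound_general n v m hm ε hsmall T hgap
end
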